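/- Let A be a C*-algebra, a, a' ∈ A₊ with ‖a − a'‖ < ε. Then there exists a contraction x ∈ A with (a'−ε)₊ = x* a x. -/

import Mathlib

/-!
Put `b = (a' - ε)₊`, `s = b^{1/2}` and `δ = ε - ‖a - a'‖ > 0`. Conjugating
`a' - a ≤ ‖a - a'‖` by `s` gives `b² + ε b = s a' s ≤ s a s + ‖a - a'‖ b`, that is
`b² + δ b ≤ c := s a s`. In the unitization put `x_t = s (c + t)^{-1/2} s` for `t > 0`.
Everything follows from `‖s* k(c) s‖ ≤ ‖k(c)^{1/2} d(c) k(c)^{1/2}‖` whenever `s s* ≤ d(c)`: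
with `d(c) = c^{1/2}` (`b ≤ c^{1/2}` by operator monotonicity of the square root) it shows
`‖x_t‖ ≤ 1`, and with `d(c) = c / δ` it gives `‖x_t* a x_t - b‖ ≤ t / δ` and
`‖x_t - x_r‖ ≤ √r / δ` for `t ≤ r`. So `x_t` converges as `t → 0⁺`, and its limit `x` is a
contraction with `x* a x = b`.
-/

/-- The positive part `(a − ε)₊` of a positive element, via functional calculus. -/
noncomputable def cutDown {A : Type*} [NonUnitalCStarAlgebra A] [PartialOrder A]
    [StarOrderedRing A] (a : A) (ε : ℝ) : A :=
  cfcₙ (fun t : ℝ => max (t - ε) 0) a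

open Filter Topology
open scoped CStarAlgebra

lemma mul_inv_sqrt_add_sub_inv_sqrt_add_le {u t r : ℝ} (hu : 0 ≤ u) (ht : 0 < t) (htr : t ≤ r) :
    u * ((√(u + t))⁻¹ - (√(u + r))⁻¹) ≤ √r := by
  set p := √(u + t)
  set q := √(u + r)
  have hp : 0 < p := Real.sqrt_pos.2 (by linarith)
  have hq : 0 < q := Real.sqrt_pos.2 (by linarith)
  have hpq : p ≤ q := Real.sqrt_le_sqrt (by linarith)
  have hu_le : u ≤ p * q := by
    have := Real.mul_self_sqrt hu
    nlinarith [Real.sqrt_le_sqrt (show u ≤ u + t by linarith),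
      Real.sqrt_le_sqrt (show u ≤ u + r by linarith), Real.sqrt_nonneg u]
  have hq_le : q ≤ p + √r := by
    refine Real.sqrt_le_iff.2 ⟨by positivity, ?_⟩
    nlinarith [Real.sq_sqrt (show 0 ≤ u + t by linarith), Real.sq_sqrt (show 0 ≤ r by linarith),
      Real.sqrt_nonneg r]
  calc u * (p⁻¹ - q⁻¹) = u / (p * q) * (q - p) := by field_simp
    _ ≤ 1 * (q - p) := by
        gcongr
        exact div_le_one_of_le₀ hu_le (by positivity)
    _ ≤ √r := by linarith

section NonUnital

variable {A : Type*} [NonUnitalCStarAlgebra A]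

lemma cfcₙ_mul_mul_cfcₙ (f : ℝ → ℝ) (a : A) (hf : ContinuousOn f (quasispectrum ℝ a))
    (hf₀ : f 0 = 0) (ha : IsSelfAdjoint a) :
    cfcₙ f a * a * cfcₙ f a = cfcₙ (fun u => f u * u * f u) a := by
  rw [cfcₙ_mul (fun u => f u * u) f a (hf.mul continuousOn_id) (by simp [hf₀]) hf hf₀,
    cfcₙ_mul f (fun u => u) a hf hf₀ continuousOn_id rfl, cfcₙ_id' ℝ a]

variable [PartialOrder A] [StarOrderedRing A]

lemma norm_star_mul_star_mul_self_mul_le {S D : A} (h : A) (hSD : S * star S ≤ D) :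
    ‖star S * (star h * h) * S‖ ≤ ‖h * D * star h‖ := by
  have hleft : star S * (star h * h) * S = star (h * S) * (h * S) := by
    simp only [star_mul, mul_assoc]
  have hright : h * (S * star S) * star h = h * S * star (h * S) := by
    simp only [star_mul, mul_assoc]
  calc ‖star S * (star h * h) * S‖ = ‖h * (S * star S) * star h‖ := by
        rw [hleft, hright, CStarRing.norm_star_mul_self, CStarRing.norm_self_mul_star]
    _ ≤ ‖h * D * star h‖ :=
        CStarAlgebra.norm_le_norm_of_nonneg_of_le
          (star_right_conjugate_nonneg (mul_star_self_nonneg S) h)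
          (star_right_conjugate_le_conjugate hSD h)

end NonUnital

section Unital

variable {B : Type*} [CStarAlgebra B]

lemma cfc_mul_mul_cfc (f : ℝ → ℝ) (a : B) (hf : ContinuousOn f (spectrum ℝ a))
    (ha : IsSelfAdjoint a) :
    cfc f a * a * cfc f a = cfc (fun u => f u * u * f u) a := by
  rw [cfc_mul (fun u => f u * u) f a (hf.mul continuousOn_id) hf,
    cfc_mul f (fun u => u) a hf continuousOn_id, cfc_id' ℝ a]

variable [PartialOrder B] [StarOrderedRing B]

lemma norm_star_mul_cfc_mul_le {S C : B} {k d : ℝ → ℝ} {M : ℝ}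
    (hSC : S * star S ≤ cfc d C) (hk : ContinuousOn k (spectrum ℝ C))
    (hd : ContinuousOn d (spectrum ℝ C)) (hk₀ : ∀ u ∈ spectrum ℝ C, 0 ≤ k u) (hM : 0 ≤ M)
    (hkd : ∀ u ∈ spectrum ℝ C, ‖k u * d u‖ ≤ M) :
    ‖star S * cfc k C * S‖ ≤ M := by
  set h := cfc (fun u => √(k u)) C
  have hsqrt : ContinuousOn (fun u => √(k u)) (spectrum ℝ C) := hk.sqrt
  have hh : star h * h = cfc k C := by
    rw [IsSelfAdjoint.cfc.star_eq, ← cfc_mul _ _ C hsqrt hsqrt]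
    exact cfc_congr fun u hu => Real.mul_self_sqrt (hk₀ u hu)
  have hhDh : h * cfc d C * star h = cfc (fun u => k u * d u) C := by
    rw [IsSelfAdjoint.cfc.star_eq, ← cfc_mul _ _ C hsqrt hd,
      ← cfc_mul (fun u => √(k u) * d u) _ C (hsqrt.mul hd) hsqrt]
    refine cfc_congr fun u hu => ?_
    rw [mul_right_comm, Real.mul_self_sqrt (hk₀ u hu)]
  rw [← hh]
  exact (norm_star_mul_star_mul_self_mul_le h hSC).trans (hhDh ▸ norm_cfc_le hM hkd)

lemma continuousOn_inv_sqrt_add {C : B} (hC : 0 ≤ C) {t : ℝ} (ht : 0 < t) :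
    ContinuousOn (fun u => (√(u + t))⁻¹) (spectrum ℝ C) :=
  ContinuousOn.inv₀ (by fun_prop) fun u hu =>
    (Real.sqrt_pos.2 (by linarith [spectrum_nonneg_of_nonneg hC hu])).ne'

end Unital

namespace KirchbergRordam

variable {B : Type*} [CStarAlgebra B]

noncomputable def approx (S a : B) (t : ℝ) : B :=
  star S * cfc (fun u => (√(u + t))⁻¹) (S * a * star S) * S

lemma star_approx (S a : B) (t : ℝ) : star (approx S a t) = approx S a t := by
  simp only [approx, star_mul, star_star, IsSelfAdjoint.cfc.star_eq, mul_assoc]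

variable [PartialOrder B] [StarOrderedRing B] {S a : B} {δ t r : ℝ}

lemma norm_approx_le_one (hsq : S * star S * (S * star S) ≤ S * a * star S) (ht : 0 < t) :
    ‖approx S a t‖ ≤ 1 := by
  have hSS : 0 ≤ S * star S := mul_star_self_nonneg S
  have hC : 0 ≤ S * a * star S := hSS.isSelfAdjoint.mul_self_nonneg.trans hsq
  have hSC : S * star S ≤ cfc Real.sqrt (S * a * star S) := by
    rw [← cfcₙ_eq_cfc, ← CFC.sqrt_eq_real_sqrt _ hC, ← CFC.sqrt_mul_self (S * star S) hSS]
    exact CFC.sqrt_le_sqrt _ _ hsq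
  refine norm_star_mul_cfc_mul_le hSC (continuousOn_inv_sqrt_add hC ht)
    Real.continuous_sqrt.continuousOn (fun u _ => by positivity) zero_le_one fun u hu => ?_
  have hu := spectrum_nonneg_of_nonneg hC hu
  rw [Real.norm_of_nonneg (by positivity), inv_mul_le_one₀ (Real.sqrt_pos.2 (by linarith))]
  exact Real.sqrt_le_sqrt (by linarith)

lemma nonneg_of_smul_mul_star_le (hδ : 0 < δ) (hlin : δ • (S * star S) ≤ S * a * star S) :
    0 ≤ S * a * star S :=
  (smul_nonneg hδ.le (mul_star_self_nonneg S)).trans hlin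

lemma mul_star_le_cfc_const_mul (hδ : 0 < δ) (hlin : δ • (S * star S) ≤ S * a * star S) :
    S * star S ≤ cfc (fun u => δ⁻¹ * u) (S * a * star S) := by
  rw [cfc_const_mul_id _ _ (nonneg_of_smul_mul_star_le hδ hlin).isSelfAdjoint,
    ← inv_smul_smul₀ hδ.ne' (S * star S)]
  exact smul_le_smul_of_nonneg_left hlin (inv_nonneg.2 hδ.le)

lemma norm_star_approx_mul_approx_sub_le (hδ : 0 < δ)
    (hlin : δ • (S * star S) ≤ S * a * star S) (ht : 0 < t) :
    ‖star (approx S a t) * a * approx S a t - star S * S‖ ≤ δ⁻¹ * t := by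
  have hC := nonneg_of_smul_mul_star_le hδ hlin
  have hg := continuousOn_inv_sqrt_add hC ht
  have hpos : ∀ u ∈ spectrum ℝ (S * a * star S), 0 < u + t := fun u hu =>
    by linarith [spectrum_nonneg_of_nonneg hC hu]
  set g : ℝ → ℝ := fun u => (√(u + t))⁻¹
  set G := cfc g (S * a * star S)
  have hconj :
      star (approx S a t) * a * approx S a t = star S * (G * (S * a * star S) * G) * S := by
    rw [star_approx]
    simp only [approx, G, g, mul_assoc]
  have hGCG : G * (S * a * star S) * G = cfc (fun u => g u * u * g u) (S * a * star S) :=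
    cfc_mul_mul_cfc g _ hg hC.isSelfAdjoint
  have hdefect : 1 - G * (S * a * star S) * G = cfc (fun u => t / (u + t)) (S * a * star S) := by
    rw [hGCG, ← cfc_one ℝ _ hC.isSelfAdjoint, ← cfc_sub (1 : ℝ → ℝ) (fun u => g u * u * g u) _
      continuousOn_const ((hg.mul continuousOn_id).mul hg)]
    refine (cfc_congr fun u hu => ?_).symm
    simp only [g, Pi.one_apply]
    have hu := hpos u hu
    rw [mul_right_comm, ← mul_inv, Real.mul_self_sqrt hu.le]
    field_simp
    ring
  have hsub : star S * S - star S * (G * (S * a * star S) * G) * S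
      = star S * cfc (fun u => t / (u + t)) (S * a * star S) * S := by
    rw [← hdefect, mul_sub, sub_mul, mul_one]
  rw [← norm_neg, neg_sub, hconj, hsub]
  refine norm_star_mul_cfc_mul_le (mul_star_le_cfc_const_mul hδ hlin)
    (continuousOn_const.div (by fun_prop) fun u hu => (hpos u hu).ne') (by fun_prop)
    (fun u hu => (div_pos ht (hpos u hu)).le) (by positivity) fun u hu => ?_
  have hu₀ := spectrum_nonneg_of_nonneg hC hu
  rw [Real.norm_of_nonneg (by positivity), div_mul_eq_mul_div, div_le_iff₀ (hpos u hu)]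
  nlinarith [mul_pos (inv_pos.2 hδ) (mul_pos ht ht)]

lemma norm_approx_sub_approx_le (hδ : 0 < δ) (hlin : δ • (S * star S) ≤ S * a * star S)
    (ht : 0 < t) (htr : t ≤ r) :
    ‖approx S a t - approx S a r‖ ≤ δ⁻¹ * √r := by
  have hC := nonneg_of_smul_mul_star_le hδ hlin
  have hgt := continuousOn_inv_sqrt_add hC ht
  have hgr := continuousOn_inv_sqrt_add hC (ht.trans_le htr)
  have hsub : approx S a t - approx S a r
      = star S * cfc (fun u => (√(u + t))⁻¹ - (√(u + r))⁻¹) (S * a * star S) * S := by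
    rw [cfc_sub _ _ _ hgt hgr, mul_sub, sub_mul, approx, approx]
  rw [hsub]
  have hk₀ : ∀ u ∈ spectrum ℝ (S * a * star S), 0 ≤ (√(u + t))⁻¹ - (√(u + r))⁻¹ := fun u hu => by
    have hu₀ := spectrum_nonneg_of_nonneg hC hu
    exact sub_nonneg.2 (inv_anti₀ (Real.sqrt_pos.2 (by linarith)) (Real.sqrt_le_sqrt (by linarith)))
  refine norm_star_mul_cfc_mul_le (mul_star_le_cfc_const_mul hδ hlin) (hgt.sub hgr) (by fun_prop)
    hk₀ (by positivity) fun u hu => ?_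
  have hu₀ := spectrum_nonneg_of_nonneg hC hu
  rw [Real.norm_of_nonneg (mul_nonneg (hk₀ u hu) (by positivity)), mul_left_comm, mul_comm _ u]
  exact mul_le_mul_of_nonneg_left (mul_inv_sqrt_add_sub_inv_sqrt_add_le hu₀ ht htr)
    (inv_nonneg.2 hδ.le)

lemma exists_tendsto_approx (hδ : 0 < δ) (hlin : δ • (S * star S) ≤ S * a * star S) :
    ∃ L, Tendsto (approx S a) (𝓝[>] 0) (𝓝 L) := by
  refine cauchy_map_iff_exists_tendsto.1 (Metric.cauchy_iff.2 ⟨inferInstance, fun ε hε => ?_⟩)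
  set ρ := (δ * ε / 2) ^ 2
  have hρ : 0 < ρ := by positivity
  have hdist : ∀ t r, 0 < t → t ≤ r → r ≤ ρ → dist (approx S a t) (approx S a r) < ε := by
    intro t r ht htr hrρ
    calc dist (approx S a t) (approx S a r) ≤ δ⁻¹ * √r :=
          (dist_eq_norm _ _).trans_le (norm_approx_sub_approx_le hδ hlin ht htr)
      _ ≤ δ⁻¹ * √ρ := by gcongr
      _ = ε / 2 := by
        rw [Real.sqrt_sq (by positivity)]
        field_simp
      _ < ε := half_lt_self hε
  refine ⟨approx S a '' Set.Ioc 0 ρ, image_mem_map (Ioc_mem_nhdsGT hρ), ?_⟩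
  rintro _ ⟨t, ⟨ht, htρ⟩, rfl⟩ _ ⟨r, ⟨hr, hrρ⟩, rfl⟩
  rcases le_total t r with htr | hrt
  · exact hdist t r ht htr hrρ
  · exact dist_comm (approx S a t) _ ▸ hdist r t hr hrt htρ

theorem exists_tendsto_approx_star_mul_mul_eq (hδ : 0 < δ)
    (hsq : S * star S * (S * star S) ≤ S * a * star S) (hlin : δ • (S * star S) ≤ S * a * star S) :
    ∃ L, Tendsto (approx S a) (𝓝[>] 0) (𝓝 L) ∧ ‖L‖ ≤ 1 ∧ star L * a * L = star S * S := by
  obtain ⟨L, hL⟩ := exists_tendsto_approx hδ hlin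
  have hconj : Tendsto (fun t => star (approx S a t) * a * approx S a t) (𝓝[>] 0)
      (𝓝 (star L * a * L)) :=
    (hL.star.mul tendsto_const_nhds).mul hL
  have hdefect : Tendsto (fun t => star (approx S a t) * a * approx S a t) (𝓝[>] 0)
      (𝓝 (star S * S)) := by
    rw [tendsto_iff_norm_sub_tendsto_zero]
    refine squeeze_zero' (g := fun t => δ⁻¹ * t) (Eventually.of_forall fun _ => norm_nonneg _) ?_ ?_
    · filter_upwards [self_mem_nhdsWithin] with t ht
        using norm_star_approx_mul_approx_sub_le hδ hlin ht
    · simpa using ((continuous_const_mul δ⁻¹).tendsto 0).mono_left nhdsWithin_le_nhds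
  refine ⟨L, hL, le_of_tendsto hL.norm ?_, tendsto_nhds_unique hconj hdefect⟩
  filter_upwards [self_mem_nhdsWithin] with t ht using norm_approx_le_one hsq ht

end KirchbergRordam

theorem exists_norm_le_one_star_mul_mul_eq {A : Type*} [NonUnitalCStarAlgebra A]
    [PartialOrder A] [StarOrderedRing A] {s a : A} {δ : ℝ} (hδ : 0 < δ)
    (hsq : s * star s * (s * star s) ≤ s * a * star s)
    (hlin : δ • (s * star s) ≤ s * a * star s) :
    ∃ x : A, ‖x‖ ≤ 1 ∧ star x * a * x = star s * s := by
  have hinr : Monotone (Unitization.inr : A → A⁺¹) :=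
    OrderHomClass.mono (Unitization.inrNonUnitalStarAlgHom ℂ A)
  obtain ⟨L, hL, hL₁, hLa⟩ := KirchbergRordam.exists_tendsto_approx_star_mul_mul_eq
    (S := (s : A⁺¹)) (a := (a : A⁺¹)) hδ (by simpa using hinr hsq) (by simpa using hinr hlin)
  have hrange : ∀ t, KirchbergRordam.approx (s : A⁺¹) a t ∈ Set.range (Unitization.inr (R := ℂ)) :=
    fun t => ⟨_, Unitization.ext (by simp [KirchbergRordam.approx]) rfl⟩
  obtain ⟨x, rfl⟩ := (Unitization.isometry_inr (𝕜 := ℂ)).isClosedEmbedding.isClosed_range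
    |>.mem_of_tendsto hL (Eventually.of_forall hrange)
  exact ⟨x, Unitization.norm_inr (𝕜 := ℂ) x ▸ hL₁,
    Unitization.inr_injective (R := ℂ) (by simpa using hLa)⟩

section CutDown

variable {A : Type*} [NonUnitalCStarAlgebra A]

noncomputable def sqrtCutDown (a : A) (ε : ℝ) : A :=
  cfcₙ (fun t : ℝ => √(max (t - ε) 0)) a

lemma isSelfAdjoint_sqrtCutDown (a : A) (ε : ℝ) : IsSelfAdjoint (sqrtCutDown a ε) :=
  IsSelfAdjoint.cfcₙ

variable [PartialOrder A] [StarOrderedRing A] {ε : ℝ}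

lemma sqrtCutDown_mul_self (a : A) (hε : 0 ≤ ε) :
    sqrtCutDown a ε * sqrtCutDown a ε = cutDown a ε := by
  rw [sqrtCutDown, ← cfcₙ_mul _ _ a (by fun_prop) (by simp [hε]) (by fun_prop) (by simp [hε])]
  exact cfcₙ_congr fun u _ => Real.mul_self_sqrt (le_max_right _ _)

lemma sqrtCutDown_mul_mul_sqrtCutDown {a : A} (ha : IsSelfAdjoint a) (hε : 0 ≤ ε) :
    sqrtCutDown a ε * a * sqrtCutDown a ε = cutDown a ε * cutDown a ε + ε • cutDown a ε := by
  rw [sqrtCutDown, cfcₙ_mul_mul_cfcₙ _ a (by fun_prop) (by simp [hε]) ha, cutDown,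
    ← cfcₙ_mul _ _ a (by fun_prop) (by simp [hε]) (by fun_prop) (by simp [hε]),
    ← cfcₙ_smul ε _ a (by fun_prop) (by simp [hε]),
    ← cfcₙ_add _ _ a (by fun_prop) (by simp [hε]) (by fun_prop) (by simp [hε])]
  refine cfcₙ_congr fun u _ => ?_
  rcases le_total u ε with h | h
  · simp [max_eq_right (sub_nonpos.2 h)]
  · rw [max_eq_left (sub_nonneg.2 h), mul_right_comm, Real.mul_self_sqrt (sub_nonneg.2 h),
      smul_eq_mul]
    ring

lemma cutDown_mul_self_add_smul_le {a a' : A} (ha : IsSelfAdjoint a) (ha' : IsSelfAdjoint a')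
    (hε : 0 ≤ ε) :
    cutDown a' ε * cutDown a' ε + (ε - ‖a - a'‖) • cutDown a' ε
      ≤ sqrtCutDown a' ε * a * sqrtCutDown a' ε := by
  have h := CStarAlgebra.star_left_conjugate_le_norm_smul (a := sqrtCutDown a' ε) (ha'.sub ha)
  rw [(isSelfAdjoint_sqrtCutDown a' ε).star_eq, sqrtCutDown_mul_self a' hε, norm_sub_rev, mul_sub,
    sub_mul, sqrtCutDown_mul_mul_sqrtCutDown ha' hε] at h
  rw [sub_smul, ← add_sub_assoc, sub_le_iff_le_add]
  exact sub_le_iff_le_add'.1 h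

end CutDown

/-- **Kirchberg–Rørdam, Lemma 2.2:** if `a, a'` are positive with `‖a − a'‖ < ε`, then
there is a contraction `x` with `(a' − ε)₊ = x* a x`. -/
theorem kirchberg_rordam {A : Type*} [NonUnitalCStarAlgebra A] [PartialOrder A]
    [StarOrderedRing A] (a a' : A) (ha : 0 ≤ a) (ha' : 0 ≤ a')
    (ε : ℝ) (hε : ‖a - a'‖ < ε) :
    ∃ x : A, ‖x‖ ≤ 1 ∧ cutDown a' ε = star x * a * x := by
  have hε₀ : 0 ≤ ε := (norm_nonneg _).trans hε.le
  have hδ : 0 < ε - ‖a - a'‖ := sub_pos.2 hε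
  have hb : 0 ≤ cutDown a' ε := cfcₙ_nonneg fun u _ => le_max_right _ _
  have hkey := cutDown_mul_self_add_smul_le ha.isSelfAdjoint ha'.isSelfAdjoint hε₀
  have hs := isSelfAdjoint_sqrtCutDown a' ε
  obtain ⟨x, hx, hxa⟩ := exists_norm_le_one_star_mul_mul_eq (s := sqrtCutDown a' ε) (a := a) hδ
    (by
      rw [hs.star_eq, sqrtCutDown_mul_self a' hε₀]
      exact (le_add_of_nonneg_right (smul_nonneg hδ.le hb)).trans hkey)
    (by
      rw [hs.star_eq, sqrtCutDown_mul_self a' hε₀]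
      exact (le_add_of_nonneg_left hb.isSelfAdjoint.mul_self_nonneg).trans hkey)
  refine ⟨x, hx, ?_⟩
  rw [hxa, hs.star_eq, sqrtCutDown_mul_self a' hε₀]
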